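/- If a smooth irreducible complex variety N is unirational (a nonempty Zariski open subset is covered by images of ℂℙ¹), then every morphism from N to an abelian variety is constant. -/

import Mathlib

/-!
The derivative of a holomorphic map `g` into `V ⧸ Λ` is well defined, because two local lifts of
`g` to `V` differ by a locally constant element of the discrete group `Λ`. For a map from `ℂℙ¹`
this derivative `D` is an entire function on the affine chart, and comparing with a lift `G₀` in
the chart at infinity gives `D (1 / z) = -z² G₀'(z) → 0` as `z → 0`. By Liouville `D = 0`, so the
map is constant. Hence `f` is constant along rational curves, so on `U` by the chains, and on `N`
by continuity and density of `U`.
-/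

open scoped Topology OnePoint Manifold

/-- A holomorphic map from `ℂℙ¹ = OnePoint ℂ` to a complex manifold `N`
(holomorphy in both standard affine charts of `ℂℙ¹`). -/
def HoloFromSphere {E : Type*} [NormedAddCommGroup E] [NormedSpace ℂ E]
    {N : Type*} [TopologicalSpace N] [ChartedSpace E N]
    (c : OnePoint ℂ → N) : Prop :=
  MDifferentiable 𝓘(ℂ, ℂ) 𝓘(ℂ, E) (fun z : ℂ => c z) ∧
  MDifferentiable 𝓘(ℂ, ℂ) 𝓘(ℂ, E)
    (fun z : ℂ => c (if z = 0 then ∞ else ((z⁻¹ : ℂ) : OnePoint ℂ)))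

open Filter Set

section DiscreteSubgroup

variable {X V : Type*} [TopologicalSpace X] [AddCommGroup V] [TopologicalSpace V]
  [IsTopologicalAddGroup V] {Λ : AddSubgroup V} [DiscreteTopology Λ]

theorem eventuallyEq_add_const_of_mk_eventuallyEq {G₁ G₂ : X → V} {w : X}
    (h₁ : ContinuousAt G₁ w) (h₂ : ContinuousAt G₂ w)
    (h : ∀ᶠ z in 𝓝 w, (G₁ z : V ⧸ Λ) = G₂ z) :
    G₁ =ᶠ[𝓝 w] fun z => G₂ z + (G₁ w - G₂ w) := by
  have hmem : ∀ᶠ z in 𝓝 w, G₁ z - G₂ z ∈ Λ :=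
    h.mono fun z hz => QuotientAddGroup.eq_iff_sub_mem.1 hz
  have hdiff : Tendsto (fun z => G₁ z - G₂ z) (𝓝 w) (𝓝[(Λ : Set V)] (G₁ w - G₂ w)) :=
    tendsto_nhdsWithin_iff.2 ⟨h₁.sub h₂, hmem⟩
  rw [(isDiscrete_iff_discreteTopology.2 ‹_›).nhdsWithin _ hmem.self_of_nhds, tendsto_pure]
    at hdiff
  filter_upwards [hdiff] with z hz
  rw [← hz]
  abel

end DiscreteSubgroup

section HoloLift

variable {V : Type*} [NormedAddCommGroup V] [NormedSpace ℂ V] (Λ : AddSubgroup V)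
  {g g' : ℂ → V ⧸ Λ} {G G₁ G₂ : ℂ → V} {w : ℂ}

def IsHoloLiftAt (g : ℂ → V ⧸ Λ) (G : ℂ → V) (w : ℂ) : Prop :=
  ∀ᶠ z in 𝓝 w, DifferentiableAt ℂ G z ∧ (G z : V ⧸ Λ) = g z

variable {Λ}

theorem IsHoloLiftAt.eventually (h : IsHoloLiftAt Λ g G w) :
    ∀ᶠ z in 𝓝 w, IsHoloLiftAt Λ g G z :=
  h.eventually_nhds

theorem IsHoloLiftAt.differentiableAt (h : IsHoloLiftAt Λ g G w) : DifferentiableAt ℂ G w :=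
  h.self_of_nhds.1

theorem IsHoloLiftAt.mk_eq (h : IsHoloLiftAt Λ g G w) : (G w : V ⧸ Λ) = g w :=
  h.self_of_nhds.2

theorem IsHoloLiftAt.analyticAt [CompleteSpace V] (h : IsHoloLiftAt Λ g G w) :
    AnalyticAt ℂ G w :=
  Complex.analyticAt_iff_eventually_differentiableAt.2 (h.mono fun _ hz => hz.1)

theorem IsHoloLiftAt.deriv_eq [DiscreteTopology Λ] (h₁ : IsHoloLiftAt Λ g G₁ w)
    (h₂ : IsHoloLiftAt Λ g G₂ w) : deriv G₁ w = deriv G₂ w := by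
  have := eventuallyEq_add_const_of_mk_eventuallyEq h₁.differentiableAt.continuousAt
    h₂.differentiableAt.continuousAt ((h₁.and h₂).mono fun _ hz => hz.1.2.trans hz.2.2.symm)
  rw [this.deriv_eq, deriv_add_const]

variable (Λ) in
noncomputable def liftDeriv (g : ℂ → V ⧸ Λ) (w : ℂ) : V :=
  open Classical in if h : ∃ G, IsHoloLiftAt Λ g G w then deriv h.choose w else 0

variable [DiscreteTopology Λ]

theorem IsHoloLiftAt.liftDeriv_eq (h : IsHoloLiftAt Λ g G w) : liftDeriv Λ g w = deriv G w := by
  have hex : ∃ G, IsHoloLiftAt Λ g G w := ⟨G, h⟩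
  rw [liftDeriv, dif_pos hex]
  exact hex.choose_spec.deriv_eq h

theorem IsHoloLiftAt.liftDeriv_eventuallyEq (h : IsHoloLiftAt Λ g G w) :
    liftDeriv Λ g =ᶠ[𝓝 w] deriv G :=
  h.eventually.mono fun _ hz => hz.liftDeriv_eq

theorem differentiable_liftDeriv [CompleteSpace V] (hg : ∀ w, ∃ G, IsHoloLiftAt Λ g G w) :
    Differentiable ℂ (liftDeriv Λ g) := fun w =>
  let ⟨_, hG⟩ := hg w
  hG.analyticAt.deriv.differentiableAt.congr_of_eventuallyEq hG.liftDeriv_eventuallyEq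

theorem isLocallyConstant_of_liftDeriv_eq_zero (hg : ∀ w, ∃ G, IsHoloLiftAt Λ g G w)
    (h : liftDeriv Λ g = 0) : IsLocallyConstant g := by
  refine (IsLocallyConstant.iff_eventually_eq g).2 fun w => ?_
  obtain ⟨G, hG⟩ := hg w
  obtain ⟨r, hr, hball⟩ := Metric.eventually_nhds_iff_ball.1 hG.eventually
  have hconst : ∀ z ∈ Metric.ball w r, G z = G w := fun z hz =>
    Metric.isOpen_ball.is_const_of_deriv_eq_zero (convex_ball w r).isPreconnected
      (fun u hu => (hball u hu).differentiableAt.differentiableWithinAt)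
      (fun u hu => (hball u hu).liftDeriv_eq ▸ congrFun h u) hz (Metric.mem_ball_self hr)
  filter_upwards [Metric.ball_mem_nhds w hr] with z hz
  rw [← (hball z hz).mk_eq, ← (hball w (Metric.mem_ball_self hr)).mk_eq, hconst z hz]

section Sphere

-- `g'` is `g` read in the chart `z ↦ z⁻¹` of `ℂℙ¹` at infinity.
variable (hg : ∀ w, ∃ G, IsHoloLiftAt Λ g G w) (hrel : ∀ z ≠ 0, g' z = g z⁻¹)
include hg hrel

theorem liftDeriv_inv_eq {z : ℂ} (hz : z ≠ 0) (hG₀ : IsHoloLiftAt Λ g' G z) :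
    liftDeriv Λ g z⁻¹ = -(z ^ 2) • deriv G z := by
  obtain ⟨G₁, hG₁⟩ := hg z⁻¹
  have hG₁inv : IsHoloLiftAt Λ g' (fun u => G₁ u⁻¹) z := by
    filter_upwards [(continuousAt_inv₀ hz).eventually hG₁, eventually_ne_nhds hz]
      with u ⟨hd, hl⟩ hu
    exact ⟨hd.comp u (differentiableAt_inv hu), hl.trans (hrel u hu).symm⟩
  have hchain : deriv (fun u => G₁ u⁻¹) z = -(z ^ 2)⁻¹ • deriv G₁ z⁻¹ :=
    (hG₁.differentiableAt.hasDerivAt.scomp z (hasDerivAt_inv hz)).deriv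
  rw [hG₁.liftDeriv_eq, ← hG₁inv.deriv_eq hG₀, hchain, smul_smul, neg_mul_neg,
    mul_inv_cancel₀ (pow_ne_zero 2 hz), one_smul]

variable [CompleteSpace V] (hg' : ∃ G, IsHoloLiftAt Λ g' G 0)
include hg'

theorem tendsto_liftDeriv_cocompact : Tendsto (liftDeriv Λ g) (cocompact ℂ) (𝓝 0) := by
  obtain ⟨G₀, hG₀⟩ := hg'
  have hinv : ∀ᶠ z in 𝓝[≠] 0, -(z ^ 2) • deriv G₀ z = liftDeriv Λ g z⁻¹ := by
    filter_upwards [nhdsWithin_le_nhds hG₀.eventually, self_mem_nhdsWithin] with z hz hz0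
    exact (liftDeriv_inv_eq hg hrel hz0 hz).symm
  have hlim : Tendsto (fun z => -(z ^ 2) • deriv G₀ z) (𝓝 (0 : ℂ)) (𝓝 0) := by
    have hcont : ContinuousAt (fun z : ℂ => -(z ^ 2) • deriv G₀ z) 0 :=
      (continuousAt_id.pow 2).neg.smul hG₀.analyticAt.deriv.continuousAt
    simpa using hcont.tendsto
  rw [← Metric.cobounded_eq_cocompact]
  exact (((hlim.mono_left nhdsWithin_le_nhds).congr' hinv).comp tendsto_inv₀_cobounded').congr
    fun z => congrArg (liftDeriv Λ g) (inv_inv z)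

theorem liftDeriv_eq_zero : liftDeriv Λ g = 0 :=
  funext fun z => (differentiable_liftDeriv hg).apply_eq_of_tendsto_cocompact z
    (tendsto_liftDeriv_cocompact hg hrel hg')

theorem apply_eq_of_isHoloLiftAt_sphere (z : ℂ) : g z = g' 0 := by
  have hlc := isLocallyConstant_of_liftDeriv_eq_zero hg (liftDeriv_eq_zero hg hrel hg')
  obtain ⟨G₀, hG₀⟩ := hg'
  have hcont : ContinuousAt g' 0 :=
    (QuotientAddGroup.continuous_mk.continuousAt.comp hG₀.differentiableAt.continuousAt).congr
      (hG₀.mono fun _ hu => hu.2)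
  have hconst : Tendsto g' (𝓝[≠] 0) (𝓝 (g z)) :=
    tendsto_const_nhds.congr' <| eventually_nhdsWithin_of_forall fun u hu =>
      (hlc.apply_eq_of_preconnectedSpace z u⁻¹).trans (hrel u hu).symm
  exact tendsto_nhds_unique hconst (hcont.mono_left nhdsWithin_le_nhds)

end Sphere

end HoloLift

theorem Fin.apply_zero_eq_apply_last {β : Type*} {m : ℕ} {q : Fin (m + 1) → β}
    (h : ∀ k : Fin m, q k.castSucc = q k.succ) : q 0 = q (Fin.last m) := by
  suffices ∀ k, q 0 = q k from this _
  intro k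
  induction k using Fin.induction with
  | zero => rfl
  | succ k ih => exact ih.trans (h k)

section RationalCurve

variable (E : Type*) [NormedAddCommGroup E] [NormedSpace ℂ E]
  {N : Type*} [TopologicalSpace N] [ChartedSpace E N]
  {V : Type*} [NormedAddCommGroup V] [NormedSpace ℂ V] (Λ : AddSubgroup V)

def HasHoloLocalLifts (f : N → V ⧸ Λ) : Prop :=
  ∀ x : N, ∃ W ∈ 𝓝 x, ∃ F : N → V, MDifferentiableOn 𝓘(ℂ, E) 𝓘(ℂ, V) F W ∧
    ∀ y ∈ W, (QuotientAddGroup.mk (F y) : V ⧸ Λ) = f y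

variable {E Λ} {f : N → V ⧸ Λ}

theorem HasHoloLocalLifts.continuous (hf : HasHoloLocalLifts E Λ f) : Continuous f :=
  continuous_iff_continuousAt.2 fun x => by
    obtain ⟨W, hW, F, hFd, hFl⟩ := hf x
    exact (QuotientAddGroup.continuous_mk.continuousAt.comp
      (hFd.continuousOn.continuousAt hW)).congr (eventually_of_mem hW hFl)

theorem HasHoloLocalLifts.exists_isHoloLiftAt_comp (hf : HasHoloLocalLifts E Λ f) {c : ℂ → N}
    (hc : MDifferentiable 𝓘(ℂ, ℂ) 𝓘(ℂ, E) c) (w : ℂ) :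
    ∃ G, IsHoloLiftAt Λ (fun z => f (c z)) G w := by
  obtain ⟨W, hW, F, hFd, hFl⟩ := hf (c w)
  refine ⟨F ∘ c, ?_⟩
  filter_upwards [hc.continuous.continuousAt.preimage_mem_nhds (interior_mem_nhds.2 hW)]
    with z hz
  exact ⟨mdifferentiableAt_iff_differentiableAt.1
      ((hFd.mdifferentiableAt (mem_interior_iff_mem_nhds.1 hz)).comp z (hc z)),
    hFl _ (interior_subset hz)⟩

theorem HasHoloLocalLifts.apply_eq_of_holoFromSphere [DiscreteTopology Λ] [CompleteSpace V]
    (hf : HasHoloLocalLifts E Λ f) {c : OnePoint ℂ → N} (hc : HoloFromSphere (E := E) c)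
    {a b : N} (ha : a ∈ range c) (hb : b ∈ range c) : f a = f b := by
  have hconst : ∀ p, f (c p) = f (c ∞) := by
    intro p
    cases p with
    | infty => rfl
    | coe z =>
      simpa using apply_eq_of_isHoloLiftAt_sphere (g := fun z => f (c z))
          (g' := fun z => f (c (if z = 0 then ∞ else ((z⁻¹ : ℂ) : OnePoint ℂ))))
          (hf.exists_isHoloLiftAt_comp hc.1) (fun z hz => by simp [hz])
          (hf.exists_isHoloLiftAt_comp hc.2 0) z
  obtain ⟨p, rfl⟩ := ha
  obtain ⟨q, rfl⟩ := hb
  rw [hconst p, hconst q]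

end RationalCurve

theorem stmt_2_general {E : Type*} [NormedAddCommGroup E] [NormedSpace ℂ E]
    {N : Type*} [TopologicalSpace N] [ChartedSpace E N]
    (n : ℕ) (Λ : AddSubgroup (Fin n → ℂ))
    [DiscreteTopology Λ]
    (f : N → (Fin n → ℂ) ⧸ Λ)
    -- `f` is holomorphic: it has holomorphic local lifts everywhere
    (hf : ∀ x : N, ∃ V ∈ 𝓝 x, ∃ F : N → (Fin n → ℂ),
      MDifferentiableOn 𝓘(ℂ, E) 𝓘(ℂ, Fin n → ℂ) F V ∧
      ∀ y ∈ V, (QuotientAddGroup.mk (F y) : (Fin n → ℂ) ⧸ Λ) = f y)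
    (U : Set N) (hUdense : Dense U)
    -- unirationality: any two points of the dense open set `U` are joined by a chain of
    -- rational curves in `N`
    (hchain : ∀ x ∈ U, ∀ y ∈ U, ∃ (m : ℕ) (c : Fin m → OnePoint ℂ → N)
      (p : Fin (m + 1) → N),
      (∀ k, HoloFromSphere (E := E) (c k)) ∧ p 0 = x ∧ p (Fin.last m) = y ∧
      ∀ k : Fin m, p k.castSucc ∈ Set.range (c k) ∧ p k.succ ∈ Set.range (c k)) :
    ∀ x y : N, f x = f y := by
  have hf : HasHoloLocalLifts E Λ f := hf
  have hU : EqOn (fun p : N × N => f p.1) (fun p => f p.2) (U ×ˢ U) := by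
    rintro ⟨x, y⟩ ⟨hx, hy⟩
    obtain ⟨m, c, p, hc, rfl, rfl, hp⟩ := hchain x hx y hy
    exact Fin.apply_zero_eq_apply_last (q := fun k => f (p k)) fun k =>
      hf.apply_eq_of_holoFromSphere (hc k) (hp k).1 (hp k).2
  intro x y
  exact congrFun ((hf.continuous.comp continuous_fst).ext_on (hUdense.prod hUdense)
    (hf.continuous.comp continuous_snd) hU) (x, y)

theorem stmt_2 {E : Type*} [NormedAddCommGroup E] [NormedSpace ℂ E]
    {N : Type*} [TopologicalSpace N] [ChartedSpace E N]
    [IsManifold 𝓘(ℂ, E) (⊤ : ℕ∞) N] [ConnectedSpace N]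
    (n : ℕ) (Λ : AddSubgroup (Fin n → ℂ))
    [DiscreteTopology Λ] [CompactSpace ((Fin n → ℂ) ⧸ Λ)]
    (f : N → (Fin n → ℂ) ⧸ Λ)
    -- `f` is holomorphic: it has holomorphic local lifts everywhere
    (hf : ∀ x : N, ∃ V ∈ 𝓝 x, ∃ F : N → (Fin n → ℂ),
      MDifferentiableOn 𝓘(ℂ, E) 𝓘(ℂ, Fin n → ℂ) F V ∧
      ∀ y ∈ V, (QuotientAddGroup.mk (F y) : (Fin n → ℂ) ⧸ Λ) = f y)
    (U : Set N) (hUopen : IsOpen U) (hUdense : Dense U)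
    -- unirationality: any two points of the dense open set `U` are joined by a chain of
    -- rational curves in `N`
    (hchain : ∀ x ∈ U, ∀ y ∈ U, ∃ (m : ℕ) (c : Fin m → OnePoint ℂ → N)
      (p : Fin (m + 1) → N),
      (∀ k, HoloFromSphere (E := E) (c k)) ∧ p 0 = x ∧ p (Fin.last m) = y ∧
      ∀ k : Fin m, p k.castSucc ∈ Set.range (c k) ∧ p k.succ ∈ Set.range (c k)) :
    ∀ x y : N, f x = f y :=
  stmt_2_general n Λ f hf U hUdense hchain
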